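/- arXiv:2010.16009 — 2 statements merged into one kernel-verified Lean document; each statement's English description precedes it below -/
import Mathlib

section
/- Fix ε ∈ (0,1), β ∈ (0,1) and k ∈ {1,2,…,N}. If ℙ[(1−ε)(i−1)/N + ε ≥ F(T_(i)) for all i ∈ {1,2,…,k}] ≥ β, then ℙ[C(s) ≥ (1−ε)C(0) for all s ∈ {1,2,…,⌊T_(k)⌋}] ≥ β. -/
/-! If `m` of the `T_i` are `≤ s` and `s ≤ T_(k)`, then `s` lies below `T_(m+1)` (when `m < k`)
or below `T_(k)` (when `k ≤ m`); in both cases monotonicity of `F` and the hypothesis on the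
order statistics give `F(s) ≤ (1 − ε) m/N + ε = (1 − ε) F̂_N(s) + ε`, which rearranges to
`1 − F(s) ≥ (1 − ε)(1 − F̂_N(s))`, i.e. `r(s) ≥ 1 − ε`. So the event of the hypothesis is
contained in the event of the conclusion, pointwise in `ω`. -/

open MeasureTheory ProbabilityTheory Finset

/-- Empirical distribution function `F̂_N(t) = (1/N) #{i : T_i ≤ t}`. -/
noncomputable def empCDF {Ω : Type*} {N : ℕ} (T : Fin N → Ω → ℝ) (t : ℝ) (ω : Ω) : ℝ :=
  ((Finset.univ.filter fun i : Fin N => T i ω ≤ t).card : ℝ) / N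

/-- The ratio `r(s) = (1 − F(s))/(1 − F̂_N(s))`, with convention `r(s) = 1` if `F̂_N(s) = 1`. -/
noncomputable def ratio {Ω : Type*} {N : ℕ} (T : Fin N → Ω → ℝ) (F : ℝ → ℝ) (s : ℝ)
    (ω : Ω) : ℝ :=
  if empCDF T s ω = 1 then 1 else (1 - F s) / (1 - empCDF T s ω)

/-- `Tord i`, for `1 ≤ i ≤ N`, are the order statistics of `T_1, …, T_N`:
for every `ω` they are nondecreasing in `i` and are a permutation of the `T i ω`. -/
def IsOrderStat {Ω : Type*} {N : ℕ} (T : Fin N → Ω → ℝ) (Tord : ℕ → Ω → ℝ) : Prop :=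
  ∀ ω : Ω, (∀ i j : ℕ, 1 ≤ i → i ≤ j → j ≤ N → Tord i ω ≤ Tord j ω) ∧
    ∃ σ : Equiv.Perm (Fin N), ∀ i : Fin N, Tord (i.1 + 1) ω = T (σ i) ω

namespace IsOrderStat

variable {Ω : Type*} {N : ℕ} {T : Fin N → Ω → ℝ} {Tord : ℕ → Ω → ℝ}

lemma card_filter_le_eq (hord : IsOrderStat T Tord) (ω : Ω) (s : ℝ) :
    #{i | T i ω ≤ s} = #{p : Fin N | Tord (p + 1) ω ≤ s} := by
  obtain ⟨-, σ, hσ⟩ := hord ω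
  refine card_equiv σ.symm fun i => ?_
  simp [hσ]

lemma le_card_filter_le_iff (hord : IsOrderStat T Tord) (ω : Ω) (s : ℝ) {j : ℕ}
    (hj1 : 1 ≤ j) (hjN : j ≤ N) :
    j ≤ #{i | T i ω ≤ s} ↔ Tord j ω ≤ s := by
  have hmono := (hord ω).1
  rw [hord.card_filter_le_eq]
  constructor
  · contrapose!
    intro hs
    calc #{p : Fin N | Tord (p + 1) ω ≤ s}
        ≤ #{p : Fin N | (p : ℕ) < j - 1} := by
          refine card_le_card fun p hp => ?_
          simp only [mem_filter, mem_univ, true_and] at hp ⊢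
          by_contra! hjp
          exact hs.not_ge ((hmono j (p + 1) hj1 (by omega) (by omega)).trans hp)
      _ < j := by rw [Fin.card_filter_val_lt]; omega
  · intro hs
    calc j = #{p : Fin N | (p : ℕ) < j} := by rw [Fin.card_filter_val_lt]; omega
      _ ≤ #{p : Fin N | Tord (p + 1) ω ≤ s} := by
          refine card_le_card fun p hp => ?_
          simp only [mem_filter, mem_univ, true_and] at hp ⊢
          exact (hmono (p + 1) j (by omega) hp hjN).trans hs

lemma cdf_le_empCDF_of_le (hord : IsOrderStat T Tord) {F : ℝ → ℝ} (hFmono : Monotone F)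
    {ε : ℝ} (hε : ε ≤ 1) {k : ℕ} (hk1 : 1 ≤ k) (hkN : k ≤ N) {ω : Ω}
    (hbound : ∀ i : ℕ, 1 ≤ i → i ≤ k → F (Tord i ω) ≤ (1 - ε) * ((i : ℝ) - 1) / N + ε)
    {s : ℝ} (hs : s ≤ Tord k ω) :
    F s ≤ (1 - ε) * empCDF T s ω + ε := by
  set m := #{i | T i ω ≤ s}
  have hemp : (1 - ε) * empCDF T s ω = (1 - ε) * m / N := (mul_div_assoc ..).symm
  rw [hemp]
  rcases lt_or_ge m k with hmk | hkm
  · have hlt : s < Tord (m + 1) ω :=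
      lt_of_not_ge fun h => by
        have := (hord.le_card_filter_le_iff ω s (by omega) (by omega)).2 h
        omega
    calc F s ≤ F (Tord (m + 1) ω) := hFmono hlt.le
      _ ≤ (1 - ε) * (((m + 1 : ℕ) : ℝ) - 1) / N + ε := hbound (m + 1) (by omega) hmk
      _ = (1 - ε) * m / N + ε := by push_cast; ring
  · calc F s ≤ F (Tord k ω) := hFmono hs
      _ ≤ (1 - ε) * ((k : ℝ) - 1) / N + ε := hbound k hk1 le_rfl
      _ ≤ (1 - ε) * m / N + ε := by
          have hkm' : (k : ℝ) ≤ m := by exact_mod_cast hkm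
          have : 0 ≤ 1 - ε := by linarith
          gcongr
          linarith

end IsOrderStat

lemma empCDF_le_one {Ω : Type*} {N : ℕ} (T : Fin N → Ω → ℝ) (s : ℝ) (ω : Ω) :
    empCDF T s ω ≤ 1 := by
  refine div_le_one_of_le₀ ?_ (Nat.cast_nonneg N)
  exact_mod_cast (card_filter_le _ _).trans (card_fin N).le

lemma one_sub_le_ratio {Ω : Type*} {N : ℕ} {T : Fin N → Ω → ℝ} {F : ℝ → ℝ} {s ε : ℝ} {ω : Ω}
    (hε : 0 ≤ ε) (h : F s ≤ (1 - ε) * empCDF T s ω + ε) :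
    1 - ε ≤ ratio T F s ω := by
  unfold ratio
  split_ifs with hone
  · linarith
  · have hpos : 0 < 1 - empCDF T s ω :=
      sub_pos.2 ((empCDF_le_one T s ω).lt_of_ne hone)
    rw [le_div_iff₀ hpos]
    linarith [show (1 - ε) * (1 - empCDF T s ω) = 1 - ((1 - ε) * empCDF T s ω + ε) by ring]

theorem stmt2_general {Ω : Type*} [MeasurableSpace Ω] (P : Measure Ω)
    (N : ℕ)
    (T : Fin N → Ω → ℝ)
    (F : ℝ → ℝ) (hFmono : Monotone F)
    (Tord : ℕ → Ω → ℝ) (hord : IsOrderStat T Tord)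
    (C0 : ℝ) (hC0 : 0 < C0)
    (ε : ℝ) (hε : ε ∈ Set.Ioo (0 : ℝ) 1) (β : ℝ)
    (k : ℕ) (hk1 : 1 ≤ k) (hkN : k ≤ N)
    (hhyp : ENNReal.ofReal β ≤
      P {ω | ∀ i : ℕ, 1 ≤ i → i ≤ k →
        F (Tord i ω) ≤ (1 - ε) * ((i : ℝ) - 1) / N + ε}) :
    ENNReal.ofReal β ≤
      P {ω | ∀ s : ℕ, 1 ≤ s → s ≤ ⌊Tord k ω⌋₊ →
        (1 - ε) * C0 ≤ C0 * ratio T F (s : ℝ) ω} := by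
  refine hhyp.trans (measure_mono fun ω hbound s hs1 hsk => ?_)
  have hs : (s : ℝ) ≤ Tord k ω := (Nat.le_floor_iff' (by omega)).1 hsk
  have hF := hord.cdf_le_empCDF_of_le hFmono hε.2.le hk1 hkN hbound hs
  rw [mul_comm]
  exact mul_le_mul_of_nonneg_left (one_sub_le_ratio hε.1.le hF) hC0.le

/-- Corollary 2 of the paper.  Fix `ε ∈ (0,1)`, `β ∈ (0,1)`,
`k ∈ {1,…,N}`.  If `P[(1−ε)(i−1)/N + ε ≥ F(T_(i)), ∀ i ∈ {1,…,k}] ≥ β`,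
then `P[C(s) ≥ (1−ε)C(0), ∀ s ∈ {1,…,⌊T_(k)⌋}] ≥ β`. -/
theorem stmt2 {Ω : Type*} [MeasurableSpace Ω] (P : Measure Ω) [IsProbabilityMeasure P]
    (N : ℕ) (hN : 2 ≤ N)
    (T : Fin N → Ω → ℝ) (hmeas : ∀ i, Measurable (T i))
    (hpos : ∀ i ω, 0 < T i ω)
    (hindep : iIndepFun T P)
    (F : ℝ → ℝ) (hFcont : Continuous F) (hFmono : Monotone F)
    (hcdf : ∀ i x, P {ω | T i ω ≤ x} = ENNReal.ofReal (F x))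
    (Tord : ℕ → Ω → ℝ) (hord : IsOrderStat T Tord)
    (C0 : ℝ) (hC0 : 0 < C0)
    (ε : ℝ) (hε : ε ∈ Set.Ioo (0 : ℝ) 1) (β : ℝ) (hβ : β ∈ Set.Ioo (0 : ℝ) 1)
    (k : ℕ) (hk1 : 1 ≤ k) (hkN : k ≤ N)
    (hhyp : ENNReal.ofReal β ≤
      P {ω | ∀ i : ℕ, 1 ≤ i → i ≤ k →
        F (Tord i ω) ≤ (1 - ε) * ((i : ℝ) - 1) / N + ε}) :
    ENNReal.ofReal β ≤
      P {ω | ∀ s : ℕ, 1 ≤ s → s ≤ ⌊Tord k ω⌋₊ →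
        (1 - ε) * C0 ≤ C0 * ratio T F (s : ℝ) ω} :=
  stmt2_general P N T F hFmono Tord hord C0 hC0 ε hε β k hk1 hkN hhyp
end

section
/- Fix an integer t ≥ 0, real numbers W(t) ≥ 0 and integers L_t ≥ L_{t+1} ≥ 1. Define the income C(t) := W(t)/ä_{x+t}, the longevity credit M(t+1) := (W(t) − C(t))(1+R)(L_t − L_{t+1})/L_{t+1}, the next account value W(t+1) := (W(t) − C(t))(1+R) + M(t+1), the next income C(t+1) := W(t+1)/ä_{x+t+1}, and the empirical one-year survival probability p̂_{x+t} := L_{t+1}/L_t. Then C(t+1) = C(t) · p_{x+t} / p̂_{x+t}. Consequently, when investment returns are constant, fluctuations of the income are determined solely by the ratio of the true to the empirical survival probability. -/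
open MeasureTheory

/-- The `j`-step survival probability `ⱼp_{x+t} = P[T > t+j] / P[T > t]`. -/
noncomputable def surv {Ω : Type*} [MeasurableSpace Ω] (P : Measure Ω) (T : Ω → ℝ)
    (t j : ℕ) : ℝ :=
  (P {ω | ((t : ℝ) + (j : ℝ)) < T ω}).toReal / (P {ω | (t : ℝ) < T ω}).toReal

/-- The annuity value `ä_{x+t} = Σ_{j=0}^∞ (1+R)^{−j} · ⱼp_{x+t}`. -/
noncomputable def annuity {Ω : Type*} [MeasurableSpace Ω] (P : Measure Ω) (T : Ω → ℝ)
    (R : ℝ) (t : ℕ) : ℝ :=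
  ∑' j : ℕ, ((1 + R)⁻¹) ^ j * surv P T t j

/-! Splitting off the first term of the series gives the backward recursion
`(ä_{x+t} - 1)(1+R) = p_{x+t} ä_{x+t+1}`. The longevity credit turns the account after the payment
into `W(t)(1 - 1/ä_{x+t})(1+R)/p̂_{x+t}`, which by the recursion is `C(t) p_{x+t} ä_{x+t+1}/p̂_{x+t}`. -/

section Survival

variable {Ω : Type*} [MeasurableSpace Ω] (P : Measure Ω) (T : Ω → ℝ)

lemma surv_nonneg (t j : ℕ) : 0 ≤ surv P T t j := by
  unfold surv; positivity

lemma surv_le_one [IsFiniteMeasure P] (t j : ℕ) : surv P T t j ≤ 1 := by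
  refine div_le_one_of_le₀ (ENNReal.toReal_mono (measure_ne_top P _) (measure_mono ?_))
    ENNReal.toReal_nonneg
  intro ω (h : (t : ℝ) + j < T ω)
  exact (le_add_of_nonneg_right j.cast_nonneg).trans_lt h

variable [IsFiniteMeasure P]

lemma surv_zero {t : ℕ} (ht : P {ω | (t : ℝ) < T ω} ≠ 0) : surv P T t 0 = 1 := by
  unfold surv
  simpa using div_self (ENNReal.toReal_ne_zero.2 ⟨ht, measure_ne_top P _⟩)

lemma surv_add {t : ℕ} (i j : ℕ) (hti : P {ω | ((t + i : ℕ) : ℝ) < T ω} ≠ 0) :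
    surv P T t (i + j) = surv P T t i * surv P T (t + i) j := by
  have hti' : (P {ω | ((t + i : ℕ) : ℝ) < T ω}).toReal ≠ 0 :=
    ENNReal.toReal_ne_zero.2 ⟨hti, measure_ne_top P _⟩
  unfold surv
  push_cast at hti' ⊢
  simp only [← add_assoc]
  field_simp

end Survival

section Annuity

variable {Ω : Type*} [MeasurableSpace Ω] (P : Measure Ω) [IsFiniteMeasure P] (T : Ω → ℝ)
  {R : ℝ}

lemma summable_annuity (hR : 0 < R) (t : ℕ) :
    Summable fun j : ℕ => ((1 + R)⁻¹) ^ j * surv P T t j := by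
  have hv : (1 + R)⁻¹ < 1 := inv_lt_one_of_one_lt₀ (by linarith)
  refine Summable.of_nonneg_of_le (fun j => mul_nonneg (by positivity) (surv_nonneg P T t j))
    (fun j => ?_) (summable_geometric_of_lt_one (by positivity) hv)
  exact mul_le_of_le_one_right (by positivity) (surv_le_one P T t j)

lemma one_le_annuity (hR : 0 < R) {t : ℕ} (ht : P {ω | (t : ℝ) < T ω} ≠ 0) :
    1 ≤ annuity P T R t := by
  have h := (summable_annuity P T hR t).le_tsum 0
    fun j _ => mul_nonneg (by positivity) (surv_nonneg P T t j)
  rwa [pow_zero, one_mul, surv_zero P T ht] at h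

lemma annuity_sub_one_mul (hR : 0 < R) {t : ℕ} (ht : P {ω | (t : ℝ) < T ω} ≠ 0)
    (ht1 : P {ω | ((t + 1 : ℕ) : ℝ) < T ω} ≠ 0) :
    (annuity P T R t - 1) * (1 + R) = surv P T t 1 * annuity P T R (t + 1) := by
  unfold annuity
  rw [(summable_annuity P T hR t).tsum_eq_zero_add, pow_zero, one_mul, surv_zero P T ht,
    add_sub_cancel_left, ← tsum_mul_right, ← tsum_mul_left]
  congr 1 with j
  rw [pow_succ', add_comm j 1, surv_add P T 1 j ht1]
  field_simp

end Annuity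

theorem stmt3_general {Ω : Type*} [MeasurableSpace Ω] (P : Measure Ω) [IsProbabilityMeasure P]
    (T : Ω → ℝ)
    (hpos : ∀ s : ℕ, 0 < P {ω | (s : ℝ) < T ω})
    (R : ℝ) (hR : 0 < R)
    (t : ℕ) (W : ℝ)
    (Lt Lt1 : ℕ) (hL : Lt1 ≤ Lt) (hL1 : 1 ≤ Lt1)
    (Ct M W' Ct1 phat : ℝ)
    (hCt : Ct = W / annuity P T R t)
    (hM : M = (W - Ct) * (1 + R) * ((Lt : ℝ) - (Lt1 : ℝ)) / (Lt1 : ℝ))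
    (hW' : W' = (W - Ct) * (1 + R) + M)
    (hCt1 : Ct1 = W' / annuity P T R (t + 1))
    (hphat : phat = (Lt1 : ℝ) / (Lt : ℝ)) :
    Ct1 = Ct * surv P T t 1 / phat := by
  have hA : annuity P T R t ≠ 0 := (one_pos.trans_le (one_le_annuity P T hR (hpos t).ne')).ne'
  have hA1 : annuity P T R (t + 1) ≠ 0 :=
    (one_pos.trans_le (one_le_annuity P T hR (hpos (t + 1)).ne')).ne'
  have hrec := annuity_sub_one_mul P T hR (hpos t).ne' (hpos (t + 1)).ne'
  have hLt1 : (Lt1 : ℝ) ≠ 0 := by norm_cast; omega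
  have hLt : (Lt : ℝ) ≠ 0 := by norm_cast; omega
  subst hCt hM hW' hCt1 hphat
  field_simp
  linear_combination W * Lt * hrec

/-- With `C(t) = W(t)/ä_{x+t}`, the longevity credit
`M(t+1) = (W(t) − C(t))(1+R)(L_t − L_{t+1})/L_{t+1}`,
`W(t+1) = (W(t) − C(t))(1+R) + M(t+1)`, `C(t+1) = W(t+1)/ä_{x+t+1}` and the empirical
one-year survival probability `p̂_{x+t} = L_{t+1}/L_t`, one has
`C(t+1) = C(t) · p_{x+t} / p̂_{x+t}`. -/
theorem stmt3 {Ω : Type*} [MeasurableSpace Ω] (P : Measure Ω) [IsProbabilityMeasure P]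
    (T : Ω → ℝ) (hTpos : ∀ ω, 0 < T ω)
    (hpos : ∀ s : ℕ, 0 < P {ω | (s : ℝ) < T ω})
    (R : ℝ) (hR : 0 < R)
    (t : ℕ) (W : ℝ) (hW : 0 ≤ W)
    (Lt Lt1 : ℕ) (hL : Lt1 ≤ Lt) (hL1 : 1 ≤ Lt1)
    (Ct M W' Ct1 phat : ℝ)
    (hCt : Ct = W / annuity P T R t)
    (hM : M = (W - Ct) * (1 + R) * ((Lt : ℝ) - (Lt1 : ℝ)) / (Lt1 : ℝ))
    (hW' : W' = (W - Ct) * (1 + R) + M)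
    (hCt1 : Ct1 = W' / annuity P T R (t + 1))
    (hphat : phat = (Lt1 : ℝ) / (Lt : ℝ)) :
    Ct1 = Ct * surv P T t 1 / phat :=
  stmt3_general P T hpos R hR t W Lt Lt1 hL hL1 Ct M W' Ct1 phat hCt hM hW' hCt1 hphat
end
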